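/- Let u ∈ H¹(ℝ³; ℂ), u ≠ 0, and let t*(u) > 0 be the unique positive number with Q(u^{t*}) = 0. Then t*(u) < 1 if and only if Q(u) < 0, t*(u) = 1 if and only if Q(u) = 0, and E(u^t) < E(u^{t*}) for every t > 0 with t ≠ t*(u). -/

import Mathlib

/-!
Under `u ↦ u^t` one has `A(u^t) = t² A(u)`, `C(u^t) = t^(9/2) C(u)` and `B(u^t) = t³ B(u)`, the
last because `F(|u^t|²)(ξ) = F(|u|²)(ξ/t)` and `K̂` is homogeneous of degree `0`. With `t = s²`,
`Q(u^t)` and `E(u^t)` are polynomials in `s` and `dE/ds = 2Q/s`. As `A ≥ 0 ≥ C`, and `A`, `C` do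
not both vanish (else `Q(u^t) = 0` for all `t`, against uniqueness of `t*`), writing `y = √t*`:
`y⁶ Q(u^(s²))` is `(y - s)` times a positive polynomial, and `30 y⁶ (E(u^(y²)) - E(u^(s²)))` is
`(s - y)²` times a positive polynomial.
-/

open MeasureTheory Filter Topology

noncomputable section

abbrev E3 : Type := EuclideanSpace ℝ (Fin 3)

/-- The Fourier transform of the dipolar kernel. -/
def Khat (ξ : E3) : ℝ :=
  (4 * Real.pi / 3) * (2 * ξ 2 ^ 2 - ξ 0 ^ 2 - ξ 1 ^ 2) / ‖ξ‖ ^ 2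

/-- Fourier transform with normalization `F(f)(ξ) = ∫ f(x) e^{-i x·ξ} dx`. -/
def Ftr (f : E3 → ℂ) (ξ : E3) : ℂ :=
  ∫ x : E3, Complex.exp (-Complex.I * ((inner ℝ x ξ : ℝ) : ℂ)) * f x

/-- Inverse Fourier transform. -/
def Finv (f : E3 → ℂ) (x : E3) : ℂ :=
  (((2 * Real.pi)⁻¹ ^ 3 : ℝ) : ℂ) * ∫ ξ : E3, Complex.exp (Complex.I * ((inner ℝ x ξ : ℝ) : ℂ)) * f ξ

/-- The nonlocal term `K ∗ |u|²`, defined as inverse Fourier transform of `K̂ ⬝ F(|u|²)`. -/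
def Kconv (u : E3 → ℂ) : E3 → ℂ :=
  Finv fun ξ => (Khat ξ : ℂ) * Ftr (fun y => ((‖u y‖ : ℝ) : ℂ) ^ 2) ξ

def Afun (u : E3 → ℂ) : ℝ := ∫ x : E3, ‖fderiv ℝ u x‖ ^ 2

def Bfun (l1 l2 : ℝ) (u : E3 → ℂ) : ℝ :=
  (2 * Real.pi)⁻¹ ^ 3 * ∫ ξ : E3, (l1 + l2 * Khat ξ) * ‖Ftr (fun y => ((‖u y‖ : ℝ) : ℂ) ^ 2) ξ‖ ^ 2

def Cfun (l3 : ℝ) (u : E3 → ℂ) : ℝ := l3 * ∫ x : E3, ‖u x‖ ^ 5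

def Efun (l1 l2 l3 : ℝ) (u : E3 → ℂ) : ℝ :=
  (1 / 2) * Afun u + (1 / 2) * Bfun l1 l2 u + (2 / 5) * Cfun l3 u

def Qfun (l1 l2 l3 : ℝ) (u : E3 → ℂ) : ℝ :=
  Afun u + (3 / 2) * Bfun l1 l2 u + (9 / 5) * Cfun l3 u

/-- Membership in the Sobolev space `H¹(ℝ³; ℂ)`. -/
def H1 (u : E3 → ℂ) : Prop :=
  MemLp u 2 volume ∧ MemLp (fderiv ℝ u) 2 volume

def normH1 (u : E3 → ℂ) : ℝ :=
  Real.sqrt ((∫ x : E3, ‖u x‖ ^ 2) + ∫ x : E3, ‖fderiv ℝ u x‖ ^ 2)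

def Sset (c : ℝ) : Set (E3 → ℂ) := {u | H1 u ∧ (∫ x : E3, ‖u x‖ ^ 2) = c}

def Vset (l1 l2 l3 c : ℝ) : Set (E3 → ℂ) := {u ∈ Sset c | Qfun l1 l2 l3 u = 0}

/-- The rescaling `u^t(x) = t^{3/2} u(tx)`. -/
def scale (u : E3 → ℂ) (t : ℝ) : E3 → ℂ :=
  fun x => ((t ^ ((3 : ℝ) / 2) : ℝ) : ℂ) * u (t • x)

/-- `Re ∫ ∇u ⬝ ∇v̄ dx`. -/
def gradPairing (u v : E3 → ℂ) : ℝ :=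
  ∫ x : E3, ∑ j : Fin 3,
    (fderiv ℝ u x (EuclideanSpace.single j 1) *
      (starRingEnd ℂ) (fderiv ℝ v x (EuclideanSpace.single j 1))).re

/-- `(u, β)` is a weak solution of `-(1/2)Δu + λ₁|u|²u + λ₂(K∗|u|²)u + λ₃|u|³u + βu = 0`. -/
def WeakSolution (l1 l2 l3 : ℝ) (u : E3 → ℂ) (β : ℝ) : Prop :=
  H1 u ∧ ∀ v : E3 → ℂ, H1 v →
    (1 / 2) * gradPairing u v
      + l1 * (∫ x : E3, (((‖u x‖ : ℝ) : ℂ) ^ 2 * u x * (starRingEnd ℂ) (v x)).re)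
      + l2 * (∫ x : E3, (Kconv u x * u x * (starRingEnd ℂ) (v x)).re)
      + l3 * (∫ x : E3, (((‖u x‖ : ℝ) : ℂ) ^ 3 * u x * (starRingEnd ℂ) (v x)).re)
      + β * (∫ x : E3, (u x * (starRingEnd ℂ) (v x)).re) = 0

lemma scale_one (u : E3 → ℂ) : scale u 1 = u := by
  funext x
  simp [scale]

lemma scale_sq_eq_smul {s : ℝ} (hs : 0 ≤ s) (u : E3 → ℂ) :
    scale u (s ^ 2) = s ^ 3 • fun x => u (s ^ 2 • x) := by
  have hpow : (s ^ 2) ^ ((3 : ℝ) / 2) = s ^ 3 := by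
    rw [← Real.rpow_natCast s 2, ← Real.rpow_mul hs, ← Real.rpow_natCast s 3]
    norm_num
  funext x
  simp [scale, hpow, Complex.real_smul]

lemma norm_scale_sq {s : ℝ} (hs : 0 ≤ s) (u : E3 → ℂ) (x : E3) :
    ‖scale u (s ^ 2) x‖ = s ^ 3 * ‖u (s ^ 2 • x)‖ := by
  rw [scale_sq_eq_smul hs, Pi.smul_apply, norm_smul, Real.norm_of_nonneg (by positivity)]

lemma norm_fderiv_scale_sq {s : ℝ} (hs : 0 ≤ s) (u : E3 → ℂ) (x : E3) :
    ‖fderiv ℝ (scale u (s ^ 2)) x‖ = s ^ 5 * ‖fderiv ℝ u (s ^ 2 • x)‖ := by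
  rw [scale_sq_eq_smul hs, fderiv_const_smul_field, Pi.smul_apply, fderiv_comp_smul,
    norm_smul, norm_smul, Real.norm_of_nonneg (by positivity),
    Real.norm_of_nonneg (by positivity)]
  ring

lemma Afun_scale_sq {s : ℝ} (hs : 0 < s) (u : E3 → ℂ) :
    Afun (scale u (s ^ 2)) = s ^ 4 * Afun u := by
  simp only [Afun, norm_fderiv_scale_sq hs.le, mul_pow]
  rw [integral_const_mul, Measure.integral_comp_smul_of_nonneg volume
    (fun x => ‖fderiv ℝ u x‖ ^ 2) (s ^ 2) (hR := by positivity), finrank_euclideanSpace_fin,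
    smul_eq_mul]
  field_simp

lemma Cfun_scale_sq {s : ℝ} (hs : 0 < s) (l3 : ℝ) (u : E3 → ℂ) :
    Cfun l3 (scale u (s ^ 2)) = s ^ 9 * Cfun l3 u := by
  simp only [Cfun, norm_scale_sq hs.le, mul_pow]
  rw [integral_const_mul, Measure.integral_comp_smul_of_nonneg volume
    (fun x => ‖u x‖ ^ 5) (s ^ 2) (hR := by positivity), finrank_euclideanSpace_fin, smul_eq_mul]
  field_simp

lemma Ftr_const_mul (c : ℂ) (f : E3 → ℂ) (ξ : E3) :
    Ftr (fun y => c * f y) ξ = c * Ftr f ξ := by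
  simp only [Ftr, mul_left_comm _ c]
  exact integral_const_mul c _

lemma Ftr_comp_smul {t : ℝ} (ht : 0 < t) (f : E3 → ℂ) (ξ : E3) :
    Ftr (fun y => f (t • y)) ξ = ((t ^ 3)⁻¹ : ℝ) * Ftr f (t⁻¹ • ξ) := by
  have hinner (x : E3) : inner ℝ x ξ = inner ℝ (t • x) (t⁻¹ • ξ) := by
    rw [real_inner_smul_left, real_inner_smul_right, mul_inv_cancel_left₀ ht.ne']
  simp only [Ftr, hinner]
  rw [Measure.integral_comp_smul_of_nonneg volume
    (fun z => Complex.exp (-Complex.I * ((inner ℝ z (t⁻¹ • ξ) : ℝ) : ℂ)) * f z) t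
    (hR := ht.le), finrank_euclideanSpace_fin, Complex.real_smul]

lemma Ftr_normSq_scale_sq {s : ℝ} (hs : 0 < s) (u : E3 → ℂ) (ξ : E3) :
    Ftr (fun y => ((‖scale u (s ^ 2) y‖ : ℝ) : ℂ) ^ 2) ξ
      = Ftr (fun y => ((‖u y‖ : ℝ) : ℂ) ^ 2) ((s ^ 2)⁻¹ • ξ) := by
  simp only [norm_scale_sq hs.le, Complex.ofReal_mul, mul_pow]
  rw [Ftr_const_mul, Ftr_comp_smul (by positivity) (fun y => ((‖u y‖ : ℝ) : ℂ) ^ 2), ← mul_assoc]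
  have hs' : (s : ℂ) ≠ 0 := by exact_mod_cast hs.ne'
  push_cast
  field_simp

lemma Khat_smul {c : ℝ} (hc : c ≠ 0) (ξ : E3) : Khat (c • ξ) = Khat ξ := by
  rcases eq_or_ne ξ 0 with rfl | hξ
  · simp
  have hξ' : ‖ξ‖ ≠ 0 := norm_ne_zero_iff.mpr hξ
  simp only [Khat, PiLp.smul_apply, smul_eq_mul, norm_smul, Real.norm_eq_abs, mul_pow, sq_abs]
  field_simp

lemma Bfun_scale_sq {s : ℝ} (hs : 0 < s) (l1 l2 : ℝ) (u : E3 → ℂ) :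
    Bfun l1 l2 (scale u (s ^ 2)) = s ^ 6 * Bfun l1 l2 u := by
  set g : E3 → ℝ := fun η => (l1 + l2 * Khat η) * ‖Ftr (fun y => ((‖u y‖ : ℝ) : ℂ) ^ 2) η‖ ^ 2
  have hg (ξ : E3) :
      (l1 + l2 * Khat ξ) * ‖Ftr (fun y => ((‖scale u (s ^ 2) y‖ : ℝ) : ℂ) ^ 2) ξ‖ ^ 2
        = g ((s ^ 2)⁻¹ • ξ) := by
    rw [Ftr_normSq_scale_sq hs, ← Khat_smul (by positivity : (s ^ 2)⁻¹ ≠ 0) ξ]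
  simp only [Bfun, hg]
  rw [Measure.integral_comp_inv_smul_of_nonneg volume g (by positivity),
    finrank_euclideanSpace_fin, smul_eq_mul]
  ring

lemma Afun_nonneg (u : E3 → ℂ) : 0 ≤ Afun u :=
  integral_nonneg fun _ => sq_nonneg _

lemma Cfun_nonpos {l3 : ℝ} (hl3 : l3 ≤ 0) (u : E3 → ℂ) : Cfun l3 u ≤ 0 :=
  mul_nonpos_of_nonpos_of_nonneg hl3 (integral_nonneg fun _ => by positivity)

def fiberQ (a b c s : ℝ) : ℝ := a * s ^ 4 + 3 / 2 * b * s ^ 6 + 9 / 5 * c * s ^ 9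

def fiberE (a b c s : ℝ) : ℝ := 1 / 2 * a * s ^ 4 + 1 / 2 * b * s ^ 6 + 2 / 5 * c * s ^ 9

lemma Qfun_scale_sq {s : ℝ} (hs : 0 < s) (l1 l2 l3 : ℝ) (u : E3 → ℂ) :
    Qfun l1 l2 l3 (scale u (s ^ 2)) = fiberQ (Afun u) (Bfun l1 l2 u) (Cfun l3 u) s := by
  rw [Qfun, Afun_scale_sq hs, Bfun_scale_sq hs, Cfun_scale_sq hs, fiberQ]
  ring

lemma Efun_scale_sq {s : ℝ} (hs : 0 < s) (l1 l2 l3 : ℝ) (u : E3 → ℂ) :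
    Efun l1 l2 l3 (scale u (s ^ 2)) = fiberE (Afun u) (Bfun l1 l2 u) (Cfun l3 u) s := by
  rw [Efun, Afun_scale_sq hs, Bfun_scale_sq hs, Cfun_scale_sq hs, fiberE]
  ring

section Fiber

variable {a b c x y : ℝ}

lemma add_neg_mul_pos (ha : 0 ≤ a) (hc : c ≤ 0) (hac : 0 < a ∨ c < 0) {P R : ℝ}
    (hP : 0 < P) (hR : 0 < R) : 0 < a * P + -c * R := by
  rcases hac with ha' | hc'
  · have : 0 ≤ -c := by linarith
    positivity
  · have : 0 < -c := by linarith
    positivity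

lemma fiberQ_sign (ha : 0 ≤ a) (hc : c ≤ 0) (hac : 0 < a ∨ c < 0) (hx : 0 < x)
    (hy : 0 < y) (hQy : fiberQ a b c y = 0) : ∃ P > 0, y ^ 6 * fiberQ a b c x = (y - x) * P := by
  refine ⟨a * (x ^ 4 * y ^ 4 * (x + y)) + -c * (9 / 5 * x ^ 6 * y ^ 6 * (x ^ 2 + x * y + y ^ 2)),
    add_neg_mul_pos ha hc hac (by positivity) (by positivity), ?_⟩
  unfold fiberQ at hQy ⊢
  linear_combination x ^ 6 * hQy

lemma fiberQ_neg_iff (ha : 0 ≤ a) (hc : c ≤ 0) (hac : 0 < a ∨ c < 0) (hx : 0 < x)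
    (hy : 0 < y) (hQy : fiberQ a b c y = 0) : fiberQ a b c x < 0 ↔ y < x := by
  obtain ⟨P, hP, hfac⟩ := fiberQ_sign ha hc hac hx hy hQy
  rw [← neg_pos, ← mul_pos_iff_of_pos_left (pow_pos hy 6), mul_neg, hfac, ← neg_mul, neg_sub,
    mul_pos_iff_of_pos_right hP, sub_pos]

lemma fiberQ_eq_zero_iff (ha : 0 ≤ a) (hc : c ≤ 0) (hac : 0 < a ∨ c < 0) (hx : 0 < x)
    (hy : 0 < y) (hQy : fiberQ a b c y = 0) : fiberQ a b c x = 0 ↔ x = y := by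
  obtain ⟨P, hP, hfac⟩ := fiberQ_sign ha hc hac hx hy hQy
  rw [← mul_eq_zero_iff_left (pow_pos hy 6).ne', hfac, mul_eq_zero_iff_right hP.ne', sub_eq_zero,
    eq_comm]

lemma fiberE_lt_of_ne (ha : 0 ≤ a) (hc : c ≤ 0) (hac : 0 < a ∨ c < 0) (hx : 0 < x)
    (hy : 0 < y) (hQy : fiberQ a b c y = 0) (hxy : x ≠ y) : fiberE a b c x < fiberE a b c y := by
  have hgap : 0 < 30 * y ^ 6 * (fiberE a b c y - fiberE a b c x) := by
    have hfac : 30 * y ^ 6 * (fiberE a b c y - fiberE a b c x) = (x - y) ^ 2 *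
        (a * (5 * y ^ 4 * (x + y) ^ 2 * (2 * x ^ 2 + y ^ 2))
          + -c * (6 * y ^ 6 * (x ^ 2 + x * y + y ^ 2) ^ 2 * (2 * x ^ 3 + y ^ 3))) := by
      unfold fiberE
      unfold fiberQ at hQy
      linear_combination (10 * (y ^ 6 - x ^ 6)) * hQy
    rw [hfac]
    exact mul_pos (sq_pos_of_ne_zero (sub_ne_zero.2 hxy))
      (add_neg_mul_pos ha hc hac (by positivity) (by positivity))
  have : 0 < fiberE a b c y - fiberE a b c x := pos_of_mul_pos_right hgap (by positivity)
  linarith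

end Fiber

theorem stmt8_general (l1 l2 l3 : ℝ) (hl3 : l3 < 0) (u : E3 → ℂ) (tstar : ℝ) (hts : 0 < tstar)
    (hQ : Qfun l1 l2 l3 (scale u tstar) = 0)
    (huniq : ∀ s : ℝ, 0 < s → Qfun l1 l2 l3 (scale u s) = 0 → s = tstar) :
    (tstar < 1 ↔ Qfun l1 l2 l3 u < 0) ∧
    (tstar = 1 ↔ Qfun l1 l2 l3 u = 0) ∧
    ∀ t : ℝ, 0 < t → t ≠ tstar →
      Efun l1 l2 l3 (scale u t) < Efun l1 l2 l3 (scale u tstar) := by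
  have hsq {t : ℝ} (ht : 0 < t) : ∃ s > 0, s ^ 2 = t := ⟨√t, Real.sqrt_pos.2 ht, Real.sq_sqrt ht.le⟩
  obtain ⟨y, hy, rfl⟩ := hsq hts
  have ha := Afun_nonneg u
  have hc := Cfun_nonpos hl3.le u
  rw [Qfun_scale_sq hy] at hQ
  have hac : 0 < Afun u ∨ Cfun l3 u < 0 := by
    by_contra! h
    have hQ0 (s : ℝ) :
        fiberQ (Afun u) (Bfun l1 l2 u) (Cfun l3 u) s = 3 / 2 * Bfun l1 l2 u * s ^ 6 := by
      simp [fiberQ, le_antisymm h.1 ha, le_antisymm hc h.2]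
    have hb : Bfun l1 l2 u = 0 := by simpa [hQ0, hy.ne'] using hQ
    have h2y := huniq ((2 * y) ^ 2) (by positivity)
      (by rw [Qfun_scale_sq (by positivity), hQ0, hb]; ring)
    nlinarith
  have hQu : Qfun l1 l2 l3 u = fiberQ (Afun u) (Bfun l1 l2 u) (Cfun l3 u) 1 := by
    simpa [scale_one] using Qfun_scale_sq one_pos l1 l2 l3 u
  refine ⟨?_, ?_, fun t ht hne => ?_⟩
  · rw [hQu, fiberQ_neg_iff ha hc hac one_pos hy hQ, sq_lt_one_iff₀ hy.le]
  · rw [hQu, fiberQ_eq_zero_iff ha hc hac one_pos hy hQ,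
      pow_eq_one_iff_of_nonneg hy.le two_ne_zero, eq_comm]
  · obtain ⟨x, hx, rfl⟩ := hsq ht
    rw [Efun_scale_sq hx, Efun_scale_sq hy]
    exact fiberE_lt_of_ne ha hc hac hx hy hQ (by rintro rfl; exact hne rfl)

/-- with `t*(u)` the unique positive zero of `t ↦ Q(u^t)`, one has
`t* < 1 ↔ Q(u) < 0`, `t* = 1 ↔ Q(u) = 0`, and `E(u^t) < E(u^{t*})` for `t ≠ t*`. -/
theorem stmt8 (l1 l2 l3 : ℝ) (hl3 : l3 < 0) (u : E3 → ℂ) (hu : H1 u)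
    (hu0 : ¬ u =ᵐ[volume] (0 : E3 → ℂ)) (tstar : ℝ) (hts : 0 < tstar)
    (hQ : Qfun l1 l2 l3 (scale u tstar) = 0)
    (huniq : ∀ s : ℝ, 0 < s → Qfun l1 l2 l3 (scale u s) = 0 → s = tstar) :
    (tstar < 1 ↔ Qfun l1 l2 l3 u < 0) ∧
    (tstar = 1 ↔ Qfun l1 l2 l3 u = 0) ∧
    ∀ t : ℝ, 0 < t → t ≠ tstar →
      Efun l1 l2 l3 (scale u t) < Efun l1 l2 l3 (scale u tstar) :=
  stmt8_general l1 l2 l3 hl3 u tstar hts hQ huniq
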